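/- arXiv:2011.01560 — 4 statements merged into one kernel-verified Lean document; each statement's English description precedes it below -/
import Mathlib

section
/- Let h : (-∞,0) → ℝ be a convex function with h(x) → ∞ as x → 0⁻. Then h(x) = o(h'₊(x)) as x → 0⁻, where h'₊ denotes the right derivative of h (which exists at every point by convexity). -/
/-!
Fix `y < 0`. Convexity puts the graph of `h` above its right tangent lines, so for `y < x < 0`
we have `h x - h y ≤ (x - y) h'₊(x) ≤ |y| h'₊(x)` as soon as `h'₊(x) ≥ 0`. Since `h x → ∞`,
eventually `h y ≤ h x / 2`, whence `h x ≤ 2 |y| h'₊(x)`; taking `|y|` small gives `h = o(h'₊)`.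
-/

open Filter Set

/-- The right derivative of a function `h : ℝ → ℝ` at `x`. -/
noncomputable def rightDeriv (h : ℝ → ℝ) (x : ℝ) : ℝ := derivWithin h (Set.Ici x) x

lemma rightDeriv_eq_derivWithin_Ioi (f : ℝ → ℝ) (x : ℝ) :
    rightDeriv f x = derivWithin f (Ioi x) x :=
  (derivWithin_Ioi_eq_Ici f x).symm

namespace ConvexOn

variable {S : Set ℝ} {f : ℝ → ℝ} {x y : ℝ}

lemma slope_le_rightDeriv_of_mem_interior (hfc : ConvexOn ℝ S f) (hys : y ∈ S)
    (hxs : x ∈ interior S) (hyx : y < x) : slope f y x ≤ rightDeriv f x :=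
  (hfc.slope_le_leftDeriv_of_mem_interior hys hxs hyx).trans <| by
    rw [rightDeriv_eq_derivWithin_Ioi]
    exact hfc.leftDeriv_le_rightDeriv_of_mem_interior hxs

lemma sub_le_mul_rightDeriv (hfc : ConvexOn ℝ S f) (hys : y ∈ S) (hxs : x ∈ interior S)
    (hyx : y < x) : f x - f y ≤ (x - y) * rightDeriv f x := by
  have hslope := hfc.slope_le_rightDeriv_of_mem_interior hys hxs hyx
  rw [slope_def_field, div_le_iff₀ (sub_pos.2 hyx)] at hslope
  linarith

end ConvexOn

/-- If `h` is convex on `(-∞,0)` and `h(x) → ∞` as `x → 0⁻`, then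
`h(x) = o(h'₊(x))` as `x → 0⁻`. -/
theorem convex_isLittleO_rightDeriv (h : ℝ → ℝ)
    (hconv : ConvexOn ℝ (Set.Iio (0:ℝ)) h)
    (hlim : Tendsto h (nhdsWithin 0 (Set.Iio 0)) atTop) :
    h =o[nhdsWithin 0 (Set.Iio 0)] (fun x => rightDeriv h x) := by
  refine Asymptotics.isLittleO_iff.2 fun c hc => ?_
  obtain ⟨y, hy, hyc⟩ : ∃ y : ℝ, y < 0 ∧ -y = c / 2 := ⟨-(c / 2), by linarith, neg_neg _⟩
  filter_upwards [self_mem_nhdsWithin, (eventually_gt_nhds hy).filter_mono nhdsWithin_le_nhds,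
    hlim.eventually_ge_atTop (2 * h y), hlim.eventually_gt_atTop 0]
    with x (hx : x < 0) hyx hhy hhpos
  have htangent : h x - h y ≤ (x - y) * rightDeriv h x :=
    hconv.sub_le_mul_rightDeriv hy (by rwa [interior_Iio]) hyx
  have hpos : 0 < rightDeriv h x := by
    by_contra! hneg
    nlinarith
  rw [Real.norm_of_nonneg hhpos.le, Real.norm_of_nonneg hpos.le]
  calc h x ≤ 2 * ((x - y) * rightDeriv h x) := by linarith
    _ ≤ 2 * (c / 2 * rightDeriv h x) := by gcongr; linarith
    _ = c * rightDeriv h x := by ring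
end

section
/- Let h : (-∞,0) → ℝ be convex with h(x) → ∞ as x → 0⁻, and suppose α(h) < ∞ and β(h) > 0, where α(g) = liminf_{x→0⁻} (log g(x))/log(1/|x|) and β(g) = limsup_{x→0⁻} (log g(x))/log(1/|x|). Then α(h) + α(h)/β(h) ≤ α(h'₊), where h'₊ is the right derivative of h (with the convention α(h)/β(h) = 0 if β(h) = ∞). -/
open Filter Set

/-- `α(g) = liminf_{x→0⁻} log g(x) / log(1/|x|)`, as an extended real number. -/
noncomputable def alphaInd (g : ℝ → ℝ) : EReal :=
  Filter.liminf (fun x : ℝ => ((Real.log (g x) / Real.log (1 / |x|) : ℝ) : EReal))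
    (nhdsWithin 0 (Set.Iio 0))

/-- `β(g) = limsup_{x→0⁻} log g(x) / log(1/|x|)`, as an extended real number. -/
noncomputable def betaInd (g : ℝ → ℝ) : EReal :=
  Filter.limsup (fun x : ℝ => ((Real.log (g x) / Real.log (1 / |x|) : ℝ) : EReal))
    (nhdsWithin 0 (Set.Iio 0))

open Topology

/-! For `x` near `0⁻` compare `h` at `x` and at `y = -|x| ^ θ < x`. If `|x| ^ (-p) ≤ h x` with
`p < α(h)` and `h y ≤ |y| ^ (-q) = |x| ^ (-θ q)` with `q > β(h)`, then `θ q < p` forces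
`2 h y ≤ h x`, so convexity gives `h'₊ x ≥ (h x - h y) / (x - y) ≥ h x / (2 |x| ^ θ)
≥ |x| ^ (-(p + θ)) / 2`, i.e. `α(h'₊) ≥ p + θ`; the admissible `p + θ` approach `α + α / β`.
For `β = ∞` take `θ = 0`, `y = -1`. -/

lemma ConvexOn.slope_le_rightDeriv {S : Set ℝ} {f : ℝ → ℝ} {x y : ℝ} (hf : ConvexOn ℝ S f)
    (hy : y ∈ S) (hx : x ∈ interior S) (hyx : y < x) :
    slope f y x ≤ rightDeriv f x := by
  rw [rightDeriv, ← derivWithin_Ioi_eq_Ici]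
  exact (hf.slope_le_leftDeriv_of_mem_interior hy hx hyx).trans
    (hf.leftDeriv_le_rightDeriv_of_mem_interior hx)

lemma ConvexOn.div_two_mul_le_rightDeriv {S : Set ℝ} {f : ℝ → ℝ} {x y d : ℝ}
    (hf : ConvexOn ℝ S f) (hy : y ∈ S) (hx : x ∈ interior S) (hyx : y < x)
    (hfx : 0 ≤ f x) (hdouble : 2 * f y ≤ f x) (hd : x - y ≤ d) :
    f x / (2 * d) ≤ rightDeriv f x := by
  refine le_trans ?_ (hf.slope_le_rightDeriv hy hx hyx)
  rw [slope_def_field, ← div_div]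
  exact div_le_div₀ (by linarith) (by linarith) (sub_pos.2 hyx) hd

lemma rpow_neg_le_iff_le_log_div {t c r : ℝ} (ht₀ : 0 < t) (ht₁ : t < 1) (hc : 0 < c) :
    t ^ (-r) ≤ c ↔ r ≤ Real.log c / Real.log (1 / t) := by
  have hL : 0 < Real.log (1 / t) := Real.log_pos ((one_lt_div ht₀).2 ht₁)
  rw [le_div_iff₀ hL, ← Real.log_le_log_iff (by positivity) hc, Real.log_rpow ht₀,
    one_div, Real.log_inv, neg_mul, mul_neg]

lemma le_rpow_neg_iff_log_div_le {t c r : ℝ} (ht₀ : 0 < t) (ht₁ : t < 1) (hc : 0 < c) :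
    c ≤ t ^ (-r) ↔ Real.log c / Real.log (1 / t) ≤ r := by
  have hL : 0 < Real.log (1 / t) := Real.log_pos ((one_lt_div ht₀).2 ht₁)
  rw [div_le_iff₀ hL, ← Real.log_le_log_iff hc (by positivity), Real.log_rpow ht₀,
    one_div, Real.log_inv, neg_mul, mul_neg]

lemma eventually_abs_mem_Ioo : ∀ᶠ x in 𝓝[<] (0:ℝ), |x| ∈ Ioo 0 1 := by
  filter_upwards [Ioo_mem_nhdsLT (show (-1:ℝ) < 0 by norm_num)] with x ⟨hx₁, hx₀⟩
  rw [abs_of_neg hx₀]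
  exact ⟨by linarith, by linarith⟩

lemma tendsto_abs_rpow_nhdsLT_zero {e : ℝ} (he : 0 < e) :
    Tendsto (fun x : ℝ => |x| ^ e) (𝓝[<] 0) (𝓝 0) := by
  have := (continuous_abs.tendsto (0:ℝ)).rpow_const (Or.inr he.le)
  rw [abs_zero, Real.zero_rpow he.ne'] at this
  exact this.mono_left nhdsWithin_le_nhds

lemma eventually_mul_rpow_neg_le_rpow_neg (c : ℝ) {s r : ℝ} (hsr : s < r) :
    ∀ᶠ x in 𝓝[<] (0:ℝ), c * |x| ^ (-s) ≤ |x| ^ (-r) := by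
  have hsmall : ∀ᶠ x in 𝓝[<] (0:ℝ), c * |x| ^ (r - s) ≤ 1 := by
    have := (tendsto_abs_rpow_nhdsLT_zero (sub_pos.2 hsr)).const_mul c
    rw [mul_zero] at this
    exact this.eventually (eventually_le_nhds one_pos)
  filter_upwards [hsmall, eventually_abs_mem_Ioo] with x hx hx₀
  have hsplit : |x| ^ (-s) = |x| ^ (r - s) * |x| ^ (-r) := by
    rw [← Real.rpow_add hx₀.1]; ring_nf
  rw [hsplit, ← mul_assoc]
  exact mul_le_of_le_one_left (by positivity) hx

lemma le_alphaInd_of_eventually_rpow_le {g : ℝ → ℝ} {r : ℝ}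
    (H : ∀ᶠ x in 𝓝[<] (0:ℝ), |x| ^ (-r) ≤ g x) : (r : EReal) ≤ alphaInd g := by
  apply le_liminf_of_le (by isBoundedDefault)
  filter_upwards [H, eventually_abs_mem_Ioo] with x hx ⟨hx₀, hx₁⟩
  exact EReal.coe_le_coe_iff.2
    ((rpow_neg_le_iff_le_log_div hx₀ hx₁ ((by positivity : 0 < |x| ^ (-r)).trans_le hx)).1 hx)

lemma le_alphaInd_of_eventually_mul_rpow_le {g : ℝ → ℝ} {c r : ℝ} (hc : 0 < c)
    (H : ∀ᶠ x in 𝓝[<] (0:ℝ), c * |x| ^ (-r) ≤ g x) : (r : EReal) ≤ alphaInd g := by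
  refine le_of_forall_lt_imp_le_of_dense fun e he => ?_
  obtain ⟨r', her', hr'r⟩ := EReal.exists_between_coe_real he
  refine her'.le.trans (le_alphaInd_of_eventually_rpow_le ?_)
  filter_upwards [H, eventually_mul_rpow_neg_le_rpow_neg c⁻¹ (EReal.coe_lt_coe_iff.1 hr'r)]
    with x hx hcx
  calc |x| ^ (-r') ≤ c * |x| ^ (-r) := by rwa [← inv_mul_le_iff₀ hc]
    _ ≤ g x := hx

lemma eventually_rpow_le_of_lt_alphaInd {g : ℝ → ℝ} (hg : ∀ᶠ x in 𝓝[<] (0:ℝ), 0 < g x)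
    {p : ℝ} (hp : (p : EReal) < alphaInd g) : ∀ᶠ x in 𝓝[<] (0:ℝ), |x| ^ (-p) ≤ g x := by
  filter_upwards [eventually_lt_of_lt_liminf hp, hg, eventually_abs_mem_Ioo]
    with x hx hgx ⟨hx₀, hx₁⟩
  exact (rpow_neg_le_iff_le_log_div hx₀ hx₁ hgx).2 (EReal.coe_lt_coe_iff.1 hx).le

lemma eventually_le_rpow_of_betaInd_lt {g : ℝ → ℝ} (hg : ∀ᶠ x in 𝓝[<] (0:ℝ), 0 < g x)
    {q : ℝ} (hq : betaInd g < q) : ∀ᶠ x in 𝓝[<] (0:ℝ), g x ≤ |x| ^ (-q) := by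
  filter_upwards [eventually_lt_of_limsup_lt hq, hg, eventually_abs_mem_Ioo]
    with x hx hgx ⟨hx₀, hx₁⟩
  exact (le_rpow_neg_iff_log_div_le hx₀ hx₁ hgx).2 (EReal.coe_lt_coe_iff.1 hx).le

lemma tendsto_neg_abs_rpow_nhdsLT_zero {θ : ℝ} (hθ : 0 < θ) :
    Tendsto (fun x : ℝ => -|x| ^ θ) (𝓝[<] 0) (𝓝[<] 0) := by
  refine tendsto_nhdsWithin_iff.2 ⟨?_, ?_⟩
  · simpa using (tendsto_abs_rpow_nhdsLT_zero hθ).neg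
  · filter_upwards [eventually_abs_mem_Ioo] with x hx
    exact neg_lt_zero.2 (Real.rpow_pos_of_pos hx.1 θ)

lemma eventually_two_mul_le_of_lt_alphaInd_of_betaInd_lt {h : ℝ → ℝ}
    (hpos : ∀ᶠ x in 𝓝[<] (0:ℝ), 0 < h x) {p q θ : ℝ} (hp : (p : EReal) < alphaInd h)
    (hq : betaInd h < q) (hθ : 0 < θ) (hθq : θ * q < p) :
    ∀ᶠ x in 𝓝[<] (0:ℝ), 2 * h (-|x| ^ θ) ≤ h x := by
  filter_upwards [(tendsto_neg_abs_rpow_nhdsLT_zero hθ).eventually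
      (eventually_le_rpow_of_betaInd_lt hpos hq),
    eventually_mul_rpow_neg_le_rpow_neg 2 hθq, eventually_rpow_le_of_lt_alphaInd hpos hp,
    eventually_abs_mem_Ioo] with x hy hcompare hx hx₀
  rw [abs_neg, Real.abs_rpow_of_nonneg (abs_nonneg x), abs_abs,
    ← Real.rpow_mul hx₀.1.le, ← neg_mul_eq_mul_neg] at hy
  linarith

lemma le_alphaInd_rightDeriv_of_eventually_two_mul_le {h : ℝ → ℝ}
    (hconv : ConvexOn ℝ (Iio 0) h) (hpos : ∀ᶠ x in 𝓝[<] (0:ℝ), 0 < h x) {p θ : ℝ}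
    (hp : (p : EReal) < alphaInd h) (hθ : θ < 1)
    (hdouble : ∀ᶠ x in 𝓝[<] (0:ℝ), 2 * h (-|x| ^ θ) ≤ h x) :
    ((p + θ : ℝ) : EReal) ≤ alphaInd (rightDeriv h) := by
  refine le_alphaInd_of_eventually_mul_rpow_le (c := 1 / 2) (by norm_num) ?_
  filter_upwards [eventually_rpow_le_of_lt_alphaInd hpos hp, hdouble, hpos,
    eventually_abs_mem_Ioo, self_mem_nhdsWithin] with x hx hdx hhx ⟨hx₀, hx₁⟩ (hxneg : x < 0)
  have hpow : |x| < |x| ^ θ := by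
    simpa using Real.rpow_lt_rpow_of_exponent_gt hx₀ hx₁ hθ
  have hxabs : x = -|x| := by rw [abs_of_neg hxneg, neg_neg]
  have hderiv := hconv.div_two_mul_le_rightDeriv (y := -|x| ^ θ) (d := |x| ^ θ)
    (neg_lt_zero.2 (hx₀.trans hpow)) (by rwa [interior_Iio]) (by linarith) hhx.le hdx
    (by linarith)
  calc 1 / 2 * |x| ^ (-(p + θ)) = |x| ^ (-p) / (2 * |x| ^ θ) := by
        rw [neg_add, Real.rpow_add hx₀, Real.rpow_neg hx₀.le θ]; ring
    _ ≤ h x / (2 * |x| ^ θ) := by gcongr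
    _ ≤ rightDeriv h x := hderiv

lemma alphaInd_nonneg_of_eventually_one_le {g : ℝ → ℝ} (hg : ∀ᶠ x in 𝓝[<] (0:ℝ), 1 ≤ g x) :
    0 ≤ alphaInd g := by
  simpa using le_alphaInd_of_eventually_rpow_le (g := g) (r := 0) (by simpa using hg)

lemma alphaInd_le_alphaInd_rightDeriv {h : ℝ → ℝ} (hconv : ConvexOn ℝ (Iio 0) h)
    (hlim : Tendsto h (𝓝[<] 0) atTop) : alphaInd h ≤ alphaInd (rightDeriv h) := by
  refine le_of_forall_lt_imp_le_of_dense fun e he => ?_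
  obtain ⟨p, hep, hpα⟩ := EReal.exists_between_coe_real he
  have hdouble : ∀ᶠ x in 𝓝[<] (0:ℝ), 2 * h (-|x| ^ (0:ℝ)) ≤ h x := by
    simpa using hlim.eventually_ge_atTop (2 * h (-1))
  have hp := le_alphaInd_rightDeriv_of_eventually_two_mul_le hconv
    (hlim.eventually_gt_atTop 0) hpα one_pos hdouble
  rw [add_zero] at hp
  exact hep.le.trans hp

lemma coe_add_div_le_alphaInd_rightDeriv {h : ℝ → ℝ} (hconv : ConvexOn ℝ (Iio 0) h)
    (hpos : ∀ᶠ x in 𝓝[<] (0:ℝ), 0 < h x) {a b : ℝ} (ha : alphaInd h = a) (hb : betaInd h = b)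
    (ha₀ : 0 < a) : ((a + a / b : ℝ) : EReal) ≤ alphaInd (rightDeriv h) := by
  have hab : a ≤ b := by
    have hαβ : alphaInd h ≤ betaInd h := liminf_le_limsup
    rwa [ha, hb, EReal.coe_le_coe_iff] at hαβ
  have hb₀ : 0 < b := ha₀.trans_le hab
  have hcont : Tendsto (fun t : ℝ => ((a * t + a * t ^ 3 / b : ℝ) : EReal)) (𝓝[<] 1)
      (𝓝 ((a + a / b : ℝ) : EReal)) := by
    have : Continuous fun t : ℝ => ((a * t + a * t ^ 3 / b : ℝ) : EReal) :=
      continuous_coe_real_ereal.comp (by fun_prop)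
    simpa using (this.tendsto 1).mono_left nhdsWithin_le_nhds
  refine le_of_tendsto hcont ?_
  filter_upwards [Ioo_mem_nhdsLT one_pos] with t ⟨ht₀, ht₁⟩
  -- `p = a t`, `q = b / t`, `θ = a t³ / b` give `θ q = a t² < p`, and `p + θ → a + a / b`.
  have hp : ((a * t : ℝ) : EReal) < alphaInd h := by
    rw [ha]; exact_mod_cast (by nlinarith)
  have hq : betaInd h < ((b / t : ℝ) : EReal) := by
    rw [hb]; exact_mod_cast (lt_div_iff₀ ht₀).2 (by nlinarith)
  have hθq : a * t ^ 3 / b * (b / t) < a * t := by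
    field_simp; nlinarith
  have hθ : a * t ^ 3 / b < 1 := by
    have ht₃ : t ^ 3 < 1 := pow_lt_one₀ ht₀.le ht₁ (by norm_num)
    rw [div_lt_one hb₀]; nlinarith
  exact le_alphaInd_rightDeriv_of_eventually_two_mul_le hconv hpos hp hθ
    (eventually_two_mul_le_of_lt_alphaInd_of_betaInd_lt hpos hp hq (by positivity) hθq)

theorem alpha_add_div_beta_le_alpha_rightDeriv_general (h : ℝ → ℝ)
    (hconv : ConvexOn ℝ (Set.Iio (0:ℝ)) h)
    (hlim : Tendsto h (nhdsWithin 0 (Set.Iio 0)) atTop) :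
    alphaInd h + alphaInd h / betaInd h ≤ alphaInd (rightDeriv h) := by
  have hα_le := alphaInd_le_alphaInd_rightDeriv hconv hlim
  have hα₀ : 0 ≤ alphaInd h := alphaInd_nonneg_of_eventually_one_le (hlim.eventually_ge_atTop 1)
  have hαβ : alphaInd h ≤ betaInd h := liminf_le_limsup
  cases hb : betaInd h using EReal.rec with
  | bot => simp [hb] at hαβ; simp [hαβ] at hα₀
  | top => simpa [EReal.div_top] using hα_le
  | coe b =>
    obtain ⟨a, ha⟩ : ∃ a : ℝ, alphaInd h = a :=
      ⟨_, (EReal.coe_toReal ((hb ▸ hαβ).trans_lt (EReal.coe_lt_top b)).ne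
        (hα₀.trans_lt' EReal.bot_lt_zero).ne').symm⟩
    rcases (EReal.coe_nonneg.1 (ha ▸ hα₀)).eq_or_lt with rfl | ha₀
    · simpa [ha] using hα_le
    rw [ha, ← EReal.coe_div, ← EReal.coe_add]
    exact coe_add_div_le_alphaInd_rightDeriv hconv (hlim.eventually_gt_atTop 0) ha hb ha₀

/-- If `h` is convex on `(-∞,0)` with `h(x) → ∞` as `x → 0⁻`, `α(h) < ∞` and
`β(h) > 0`, then `α(h) + α(h)/β(h) ≤ α(h'₊)` (in `EReal`, where division by `∞`
gives `0`). -/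
theorem alpha_add_div_beta_le_alpha_rightDeriv (h : ℝ → ℝ)
    (hconv : ConvexOn ℝ (Set.Iio (0:ℝ)) h)
    (hlim : Tendsto h (nhdsWithin 0 (Set.Iio 0)) atTop)
    (halpha : alphaInd h < ⊤) (hbeta : 0 < betaInd h) :
    alphaInd h + alphaInd h / betaInd h ≤ alphaInd (rightDeriv h) :=
  alpha_add_div_beta_le_alpha_rightDeriv_general h hconv hlim
end

section
/- Let f be analytic and unbounded in the unit disc 𝔻, with maximum modulus M(r,f) = max_{|z|=r}|f(z)|. Define K(r,f) = r·(log M(r,f))'₊ (right derivative), λ_M(f) = liminf_{r→1⁻} log⁺log⁺M(r,f)/log(1/(1-r)), and λ_*(f) = liminf_{r→1⁻} log⁺K(r,f)/log(1/(1-r)). Then λ_*(f) ≤ λ_M(f) + 1. -/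
open Filter Set

/-- Maximum modulus `M(r,f) = max_{|z|=r} |f(z)|`. -/
noncomputable def maxMod (f : ℂ → ℂ) (r : ℝ) : ℝ :=
  sSup ((fun z => ‖f z‖) '' Metric.sphere (0:ℂ) r)

/-- `log⁺ x = max (log x) 0`. -/
noncomputable def logPlus (x : ℝ) : ℝ := max (Real.log x) 0

/-- Lower order of growth `λ_M(f)`. -/
noncomputable def lowerOrder (f : ℂ → ℂ) : EReal :=
  Filter.liminf
    (fun r : ℝ => ((logPlus (logPlus (maxMod f r)) / Real.log (1 / (1 - r)) : ℝ) : EReal))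
    (nhdsWithin 1 (Set.Iio 1))

/-- Order of growth `σ_M(f)`. -/
noncomputable def upperOrder (f : ℂ → ℂ) : EReal :=
  Filter.limsup
    (fun r : ℝ => ((logPlus (logPlus (maxMod f r)) / Real.log (1 / (1 - r)) : ℝ) : EReal))
    (nhdsWithin 1 (Set.Iio 1))

/-- `K(r,f) = r · (log M(r,f))'₊`, using the right derivative. -/
noncomputable def Kfun (f : ℂ → ℂ) (r : ℝ) : ℝ :=
  r * derivWithin (fun t => Real.log (maxMod f t)) (Set.Ici r) r

/-- `λ_*(f) = liminf_{r→1⁻} log⁺ K(r,f) / log(1/(1-r))`. -/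
noncomputable def lowerStar (f : ℂ → ℂ) : EReal :=
  Filter.liminf
    (fun r : ℝ => ((logPlus (Kfun f r) / Real.log (1 / (1 - r)) : ℝ) : EReal))
    (nhdsWithin 1 (Set.Iio 1))

/-!
Put `F(t) = log M(t,f)`, which is increasing near `1`. If `log⁺ log⁺ M(r,f) < λ log (1/(1-r))`,
then `F` grows by at most `F(r) ≤ (1-r)^{-λ}` on `[2r-1, r]`, an interval of length `1-r`, so
somewhere on it the right derivative is at most `(1-r)^{-λ-1} + 1`, whence `K(x,f)` is too.
Since `log (1/(1-x)) ≥ log (1/(1-r)) - log 2` on that interval, this gives `λ_*(f) ≤ λ + 1`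
along a sequence of radii tending to `1`.
-/

open Topology

/-- Unlike Mathlib's mean value inequalities, this needs no continuity. -/
theorem MonotoneOn.mul_sub_le_sub_of_lt_derivWithin_Ici {g : ℝ → ℝ} {a b C : ℝ}
    (hg : MonotoneOn g (Icc a b)) (hab : a ≤ b) (hC : 0 < C)
    (hderiv : ∀ x ∈ Ico a b, C < derivWithin g (Ici x) x) :
    C * (b - a) ≤ g b - g a := by
  set S := {x ∈ Icc a b | C * (x - a) ≤ g x - g a}
  have haS : a ∈ S := ⟨left_mem_Icc.mpr hab, by simp⟩
  have hSbdd : BddAbove S := ⟨b, fun x hx => hx.1.2⟩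
  set c := sSup S
  have hc : c ∈ Icc a b := ⟨le_csSup hSbdd haS, csSup_le ⟨a, haS⟩ fun x hx => hx.1.2⟩
  -- Monotonicity lets the defining inequality of `S` pass to its supremum from the left.
  have hcS : C * (c - a) ≤ g c - g a := by
    have : c ≤ a + (g c - g a) / C := csSup_le ⟨a, haS⟩ fun x hx => by
      rw [← sub_le_iff_le_add', le_div_iff₀' hC]
      exact hx.2.trans (sub_le_sub_right (hg hx.1 hc (le_csSup hSbdd hx)) _)
    rwa [← sub_le_iff_le_add', le_div_iff₀' hC] at this
  rcases hc.2.eq_or_lt with hcb | hcb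
  · rwa [hcb] at hcS
  have hdiff : DifferentiableWithinAt ℝ g (Ici c) c :=
    differentiableWithinAt_of_derivWithin_ne_zero (hC.trans (hderiv c ⟨hc.1, hcb⟩)).ne'
  have hslope : ∀ᶠ x in 𝓝[>] c, C < slope g c x :=
    (hasDerivWithinAt_iff_tendsto_slope' (lt_irrefl c)).mp hdiff.hasDerivWithinAt.Ioi_of_Ici
      (Ioi_mem_nhds (hderiv c ⟨hc.1, hcb⟩))
  obtain ⟨x, hCx, hcx, hxb⟩ :=
    (hslope.and (Ioo_mem_nhdsGT hcb : ∀ᶠ x in 𝓝[>] c, x ∈ Ioo c b)).exists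
  rw [slope_def_field, lt_div_iff₀ (sub_pos.mpr hcx)] at hCx
  have hxS : x ∈ S := ⟨⟨hc.1.trans hcx.le, hxb.le⟩, by linarith⟩
  exact absurd (le_csSup hSbdd hxS) (not_le.mpr hcx)

theorem MonotoneOn.exists_derivWithin_Ici_le {g : ℝ → ℝ} {a b C : ℝ}
    (hg : MonotoneOn g (Icc a b)) (hab : a < b) (hC : (g b - g a) / (b - a) < C) :
    ∃ x ∈ Ico a b, derivWithin g (Ici x) x ≤ C := by
  by_contra! h
  have hgab : g a ≤ g b := hg (left_mem_Icc.mpr hab.le) (right_mem_Icc.mpr hab.le) hab.le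
  have hC0 : 0 < C := (div_nonneg (sub_nonneg.mpr hgab) (sub_nonneg.mpr hab.le)).trans_lt hC
  have := hg.mul_sub_le_sub_of_lt_derivWithin_Ici hab.le hC0 h
  rw [div_lt_iff₀ (sub_pos.mpr hab)] at hC
  linarith

theorem MonotoneOn.derivWithin_Ici_nonneg {g : ℝ → ℝ} {x b : ℝ} (hg : MonotoneOn g (Icc x b))
    (hxb : x < b) : 0 ≤ derivWithin g (Ici x) x := by
  rw [← derivWithin_inter (Iic_mem_nhds hxb), Ici_inter_Iic]
  exact hg.derivWithin_nonneg

section maxMod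

variable {f : ℂ → ℂ}

theorem norm_le_maxMod (hf : DifferentiableOn ℂ f (Metric.ball 0 1)) {r : ℝ} (hr : r < 1)
    {z : ℂ} (hz : z ∈ Metric.sphere 0 r) : ‖f z‖ ≤ maxMod f r := by
  have hsub : Metric.sphere (0 : ℂ) r ⊆ Metric.ball 0 1 := fun w hw => by
    rw [mem_sphere_zero_iff_norm] at hw
    rwa [mem_ball_zero_iff, hw]
  exact le_csSup ((isCompact_sphere 0 r).bddAbove_image
    (continuous_norm.comp_continuousOn (hf.continuousOn.mono hsub))) (mem_image_of_mem _ hz)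

theorem maxMod_monotoneOn (hf : DifferentiableOn ℂ f (Metric.ball 0 1)) :
    MonotoneOn (maxMod f) (Ico 0 1) := by
  intro r hr s hs hrs
  obtain rfl | hrs := hrs.eq_or_lt
  · rfl
  have hs0 : s ≠ 0 := (hr.1.trans_lt hrs).ne'
  refine csSup_le ((NormedSpace.sphere_nonempty.mpr hr.1).image _) ?_
  rintro _ ⟨z, hz, rfl⟩
  have hzs : z ∈ closure (Metric.ball 0 s) := by
    rw [closure_ball 0 hs0]
    exact Metric.closedBall_subset_closedBall hrs.le (Metric.sphere_subset_closedBall hz)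
  refine Complex.norm_le_of_forall_mem_frontier_norm_le Metric.isBounded_ball
    ⟨hf.mono (Metric.ball_subset_ball hs.2.le), hf.continuousOn.mono ?_⟩ (fun w hw => ?_) hzs
  · rw [closure_ball 0 hs0]
    exact Metric.closedBall_subset_ball hs.2
  · rw [frontier_ball 0 hs0] at hw
    exact norm_le_maxMod hf hs.2 hw

theorem eventually_le_maxMod (hf : DifferentiableOn ℂ f (Metric.ball 0 1))
    (hunb : ¬ BddAbove ((fun z => ‖f z‖) '' Metric.ball 0 1)) (C : ℝ) :
    ∀ᶠ r in 𝓝[<] 1, C ≤ maxMod f r := by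
  obtain ⟨_, ⟨z, hz, rfl⟩, hCz⟩ := not_bddAbove_iff.mp hunb C
  rw [mem_ball_zero_iff] at hz
  filter_upwards [Ioo_mem_nhdsLT hz] with r hr
  calc C ≤ ‖f z‖ := hCz.le
    _ ≤ maxMod f ‖z‖ := norm_le_maxMod hf hz (by simp)
    _ ≤ maxMod f r :=
      maxMod_monotoneOn hf ⟨norm_nonneg z, hz⟩ ⟨(norm_nonneg z).trans hr.1.le, hr.2⟩ hr.1.le

theorem exists_Kfun_le (hf : DifferentiableOn ℂ f (Metric.ball 0 1)) {r : ℝ}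
    (h0 : 0 ≤ 2 * r - 1) (hr : r < 1) (hM : 1 ≤ maxMod f (2 * r - 1)) :
    ∃ x ∈ Ico (2 * r - 1) r,
      0 ≤ Kfun f x ∧ Kfun f x ≤ logPlus (maxMod f r) / (1 - r) + 1 := by
  set g := fun t => Real.log (maxMod f t)
  have hM_mono : MonotoneOn (maxMod f) (Icc (2 * r - 1) r) :=
    (maxMod_monotoneOn hf).mono fun t ht => ⟨h0.trans ht.1, ht.2.trans_lt hr⟩
  have hone : ∀ t ∈ Icc (2 * r - 1) r, 1 ≤ maxMod f t := fun t ht =>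
    hM.trans (hM_mono ⟨le_rfl, by linarith⟩ ht ht.1)
  have hg : MonotoneOn g (Icc (2 * r - 1) r) := fun s hs t ht hst =>
    Real.log_le_log (one_pos.trans_le (hone s hs)) (hM_mono hs ht hst)
  have hslope : (g r - g (2 * r - 1)) / (r - (2 * r - 1)) ≤ logPlus (maxMod f r) / (1 - r) := by
    have hg0 : 0 ≤ g (2 * r - 1) := Real.log_nonneg hM
    have hgr : g r ≤ logPlus (maxMod f r) := le_max_left _ _
    rw [show r - (2 * r - 1) = 1 - r by ring]
    exact div_le_div_of_nonneg_right (by linarith) (by linarith)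
  obtain ⟨x, hx, hderiv⟩ :=
    hg.exists_derivWithin_Ici_le (by linarith) (hslope.trans_lt (lt_add_one _))
  have hderiv0 : 0 ≤ derivWithin g (Ici x) x :=
    (hg.mono (Icc_subset_Icc_left hx.1)).derivWithin_Ici_nonneg hx.2
  have hx0 : 0 ≤ x := h0.trans hx.1
  refine ⟨x, hx, mul_nonneg hx0 hderiv0, ?_⟩
  calc Kfun f x ≤ derivWithin g (Ici x) x := mul_le_of_le_one_left hderiv0 (by linarith [hx.2])
    _ ≤ _ := hderiv

end maxMod

theorem logPlus_nonneg (x : ℝ) : 0 ≤ logPlus x := le_max_right _ _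

theorem le_exp_logPlus {x : ℝ} (hx : 0 ≤ x) : x ≤ Real.exp (logPlus x) := by
  obtain rfl | hx := hx.eq_or_lt
  · exact (Real.exp_pos _).le
  calc x = Real.exp (Real.log x) := (Real.exp_log hx).symm
    _ ≤ Real.exp (logPlus x) := Real.exp_le_exp.mpr (le_max_left _ _)

theorem logPlus_le_log {x y : ℝ} (hx : 0 ≤ x) (hxy : x ≤ y) (hy : 1 ≤ y) :
    logPlus x ≤ Real.log y := by
  refine max_le ?_ (Real.log_nonneg hy)
  obtain rfl | hx := hx.eq_or_lt
  · simpa using Real.log_nonneg hy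
  exact Real.log_le_log hx hxy

/-- The point is that `A E + 1 ≤ 2 E^{λ+1}`. -/
theorem logPlus_le_of_le_mul_add_one {K A E lam : ℝ} (hK0 : 0 ≤ K) (hK : K ≤ A * E + 1)
    (hA : 0 ≤ A) (hE : 1 ≤ E) (hsmall : logPlus A < lam * Real.log E) :
    logPlus K ≤ (lam + 1) * Real.log E + Real.log 2 := by
  have hlogE : 0 ≤ Real.log E := Real.log_nonneg hE
  have hexp : 1 ≤ Real.exp ((lam + 1) * Real.log E) :=
    Real.one_le_exp (by nlinarith [logPlus_nonneg A])
  have hAE : A * E ≤ Real.exp ((lam + 1) * Real.log E) := by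
    rw [add_one_mul, Real.exp_add, Real.exp_log (one_pos.trans_le hE)]
    gcongr
    exact (le_exp_logPlus hA).trans (Real.exp_le_exp.mpr hsmall.le)
  calc logPlus K ≤ Real.log (2 * Real.exp ((lam + 1) * Real.log E)) :=
        logPlus_le_log hK0 (by linarith) (by linarith)
    _ = (lam + 1) * Real.log E + Real.log 2 := by
        rw [Real.log_mul two_ne_zero (Real.exp_pos _).ne', Real.log_exp, add_comm]

theorem tendsto_log_one_div_one_sub :
    Tendsto (fun r : ℝ => Real.log (1 / (1 - r))) (𝓝[<] 1) atTop := by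
  have h : Tendsto (fun r : ℝ => 1 - r) (𝓝[<] 1) (𝓝[>] 0) :=
    tendsto_nhdsWithin_of_tendsto_nhds_of_eventually_within _
      (((continuous_const.sub continuous_id).tendsto' 1 0 (sub_self 1)).mono_left
        nhdsWithin_le_nhds)
      (eventually_nhdsWithin_of_forall fun r hr => mem_Ioi.mpr (sub_pos.mpr hr))
  simpa only [one_div, Function.comp_def] using
    Real.tendsto_log_atTop.comp (tendsto_inv_nhdsGT_zero.comp h)

theorem log_one_div_one_sub_sub_log_two_le {r x : ℝ} (hr : r < 1) (hx : 2 * r - 1 ≤ x)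
    (hx1 : x < 1) : Real.log (1 / (1 - r)) - Real.log 2 ≤ Real.log (1 / (1 - x)) := by
  rw [← Real.log_div (by simp [(sub_pos.mpr hr).ne']) two_ne_zero, div_div]
  exact Real.log_le_log (by simp [sub_pos.mpr hr]) (one_div_le_one_div_of_le (sub_pos.mpr hx1)
    (by linarith))

theorem tendsto_two_mul_sub_one_nhdsLT :
    Tendsto (fun r : ℝ => 2 * r - 1) (𝓝[<] 1) (𝓝[<] 1) :=
  tendsto_nhdsWithin_of_tendsto_nhds_of_eventually_within _
    ((((continuous_const.mul continuous_id).sub continuous_const).tendsto' 1 1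
      (by norm_num)).mono_left nhdsWithin_le_nhds)
    (eventually_nhdsWithin_of_forall fun r hr => by simp only [mem_Iio] at hr ⊢; linarith)

/-- `(a L + c) / (L - c) → a` as `L → ∞`. -/
theorem eventually_div_le_of_lt {a y : ℝ} (c : ℝ) (hay : a < y) :
    ∀ᶠ L in atTop, ∀ N D : ℝ, 0 ≤ N → N ≤ a * L + c → L - c ≤ D → N / D ≤ y := by
  filter_upwards [eventually_gt_atTop c, eventually_ge_atTop ((c + y * c) / (y - a))]
    with L hcL hL N D hN hNL hD
  have hLc : 0 < L - c := sub_pos.mpr hcL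
  rw [div_le_iff₀ (sub_pos.mpr hay)] at hL
  calc N / D ≤ N / (L - c) := div_le_div_of_nonneg_left hN hLc hD
    _ ≤ (a * L + c) / (L - c) := div_le_div_of_nonneg_right hNL hLc.le
    _ ≤ y := by rw [div_le_iff₀ hLc]; linarith

theorem EReal.exists_lt_and_add_one_lt {x : EReal} {y : ℝ} (h : x + 1 < y) :
    ∃ lam : ℝ, x < lam ∧ lam + 1 < y := by
  have : x < ((y - 1 : ℝ) : EReal) := lt_of_not_ge fun hyx => h.not_ge <| by
    rw [← _root_.sub_add_cancel y 1]
    exact_mod_cast add_le_add_left hyx 1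
  obtain ⟨lam, hx, hy⟩ := EReal.exists_between_coe_real this
  exact ⟨lam, hx, by linarith [EReal.coe_lt_coe_iff.mp hy]⟩

/-- If `f` is analytic and unbounded in the unit disc, then `λ_*(f) ≤ λ_M(f) + 1`. -/
theorem lowerStar_le_lowerOrder_add_one (f : ℂ → ℂ)
    (hf : DifferentiableOn ℂ f (Metric.ball (0:ℂ) 1))
    (hunb : ¬ BddAbove ((fun z => ‖f z‖) '' Metric.ball (0:ℂ) 1)) :
    lowerStar f ≤ lowerOrder f + 1 := by
  refine EReal.le_of_forall_lt_iff_le.mp fun y hy => ?_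
  obtain ⟨lam, hlam, hlamy⟩ := EReal.exists_lt_and_add_one_lt hy
  have hsmall : ∃ᶠ r in 𝓝[<] 1,
      logPlus (logPlus (maxMod f r)) < lam * Real.log (1 / (1 - r)) :=
    ((frequently_lt_of_liminf_lt (by isBoundedDefault) hlam).and_eventually
      (tendsto_log_one_div_one_sub.eventually_gt_atTop 0)).mono fun r ⟨h, hL⟩ =>
        (div_lt_iff₀ hL).mp (by exact_mod_cast h)
  have hgood : ∀ᶠ r in 𝓝[<] 1, 0 ≤ 2 * r - 1 ∧ 1 ≤ maxMod f (2 * r - 1) :=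
    tendsto_two_mul_sub_one_nhdsLT.eventually
      ((eventually_nhdsWithin_of_eventually_nhds (eventually_ge_nhds one_pos)).and
        (eventually_le_maxMod hf hunb 1))
  have hratio := tendsto_log_one_div_one_sub.eventually
    (eventually_div_le_of_lt (Real.log 2) hlamy)
  refine liminf_le_of_frequently_le' ((nhdsLT_basis 1).frequently_iff.mpr fun l hl => ?_)
  obtain ⟨r, hr_small, ⟨h0, hM⟩, hr_ratio, hlr, hr1⟩ := (hsmall.and_eventually (hgood.and
    (hratio.and ((tendsto_two_mul_sub_one_nhdsLT.eventually (Ioo_mem_nhdsLT hl)).and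
      self_mem_nhdsWithin)))).exists
  obtain ⟨x, hx, hK0, hK⟩ := exists_Kfun_le hf h0 hr1 hM
  refine ⟨x, ⟨hlr.1.trans_le hx.1, hx.2.trans hr1⟩, ?_⟩
  exact_mod_cast hr_ratio _ _ (logPlus_nonneg _)
    (logPlus_le_of_le_mul_add_one hK0 (by rwa [← div_eq_mul_one_div])
      (logPlus_nonneg _) (one_le_one_div (by linarith) (by linarith)) hr_small)
    (log_one_div_one_sub_sub_log_two_le hr1 hx.1 (hx.2.trans hr1))
end

section
/- Let σ > 0 and q ∈ (0,1). If 0 < δ < exp(-1/(σ(1-q))), then the series ∑_{m=1}^∞ exp(-1/δ^{σ q^{1-m}}) converges and its sum is strictly less than 1. -/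
/-!
The key inequality is `exp (-x) ≤ 1/x` for `x > 0`, used twice. Applied at `x = 1/y` it gives
`exp (-1/y) ≤ y`, and applied at `x = t log (1/δ)` it gives `δ ^ t ≤ 1 / (t log (1/δ))`. With
`t = σ q^{-m}` the `m`-th term is therefore at most `q^m / (σ log (1/δ))`, a geometric series with
sum `1 / (σ (1 - q) log (1/δ))`, which is `< 1` exactly when `δ < exp (-1/(σ (1 - q)))`.
-/

open Real

lemma Real.exp_neg_le_inv {x : ℝ} (hx : 0 < x) : exp (-x) ≤ x⁻¹ := by
  rw [exp_neg]
  exact inv_anti₀ hx ((add_one_le_exp x).trans' (by linarith))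

lemma Real.exp_neg_inv_le {y : ℝ} (hy : 0 < y) : exp (-y⁻¹) ≤ y := by
  simpa using exp_neg_le_inv (inv_pos.mpr hy)

lemma Real.rpow_le_inv_mul_neg_log {δ t : ℝ} (hδ₀ : 0 < δ) (hδ₁ : δ < 1) (ht : 0 < t) :
    δ ^ t ≤ (t * -log δ)⁻¹ := by
  have hlog : 0 < -log δ := neg_pos.mpr (log_neg hδ₀ hδ₁)
  calc δ ^ t = exp (-(t * -log δ)) := by rw [rpow_def_of_pos hδ₀]; ring_nf
    _ ≤ (t * -log δ)⁻¹ := exp_neg_le_inv (by positivity)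

lemma Real.exp_neg_one_div_rpow_le {δ t : ℝ} (hδ₀ : 0 < δ) (hδ₁ : δ < 1) (ht : 0 < t) :
    exp (-1 / δ ^ t) ≤ (t * -log δ)⁻¹ := by
  rw [neg_div, one_div]
  exact (exp_neg_inv_le (rpow_pos_of_pos hδ₀ t)).trans (rpow_le_inv_mul_neg_log hδ₀ hδ₁ ht)

lemma exp_neg_one_div_rpow_le_geometric {σ q δ : ℝ} (hσ : 0 < σ) (hq : 0 < q)
    (hδ₀ : 0 < δ) (hδ₁ : δ < 1) (m : ℕ) :
    exp (-1 / δ ^ (σ * q ^ (1 - ((m : ℝ) + 1)))) ≤ (σ * -log δ)⁻¹ * q ^ m := by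
  have hexp : σ * q ^ (1 - ((m : ℝ) + 1)) = σ * (q ^ m)⁻¹ := by
    rw [show 1 - ((m : ℝ) + 1) = -m by ring, rpow_neg hq.le, rpow_natCast]
  calc exp (-1 / δ ^ (σ * q ^ (1 - ((m : ℝ) + 1))))
      ≤ (σ * (q ^ m)⁻¹ * -log δ)⁻¹ := by
        rw [hexp]; exact exp_neg_one_div_rpow_le hδ₀ hδ₁ (by positivity)
    _ = (σ * -log δ)⁻¹ * q ^ m := by field_simp

lemma one_lt_mul_neg_log_of_lt_exp_neg_inv {c δ : ℝ} (hc : 0 < c) (hδ₀ : 0 < δ)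
    (hδ : δ < exp (-1 / c)) : 1 < c * -log δ := by
  have := log_lt_log hδ₀ hδ
  rwa [log_exp, neg_div, lt_neg, div_lt_iff₀' hc] at this

/-- Let `σ > 0`, `q ∈ (0,1)` and `0 < δ < exp(-1/(σ(1-q)))`.  Then the series
`∑_{m=1}^∞ exp(-1/δ^{σ q^{1-m}})` converges and its sum is strictly less than `1`.
(The series is indexed by `m : ℕ`, with the term of index `m` corresponding to
the original index `m + 1`.) -/
theorem sum_exp_neg_rpow_lt_one (sigma q delta : ℝ) (hsigma : 0 < sigma)
    (hq : q ∈ Set.Ioo (0:ℝ) 1) (hdelta : 0 < delta)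
    (hdelta' : delta < Real.exp (-1 / (sigma * (1 - q)))) :
    Summable (fun m : ℕ => Real.exp (-1 / delta ^ (sigma * q ^ (1 - ((m : ℝ) + 1))))) ∧
    ∑' m : ℕ, Real.exp (-1 / delta ^ (sigma * q ^ (1 - ((m : ℝ) + 1)))) < 1 := by
  obtain ⟨hq₀, hq₁⟩ := hq
  have hc : 0 < sigma * (1 - q) := mul_pos hsigma (sub_pos.mpr hq₁)
  have hδ₁ : delta < 1 :=
    hdelta'.trans (exp_lt_one_iff.mpr (div_neg_of_neg_of_pos (by norm_num) hc))
  have hbound := exp_neg_one_div_rpow_le_geometric hsigma hq₀ hdelta hδ₁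
  have hgeom : HasSum (fun m : ℕ => (sigma * -log delta)⁻¹ * q ^ m)
      ((sigma * -log delta)⁻¹ * (1 - q)⁻¹) :=
    (hasSum_geometric_of_lt_one hq₀.le hq₁).mul_left _
  have hsum := hgeom.summable.of_nonneg_of_le (fun _ => (exp_pos _).le) hbound
  refine ⟨hsum, (hsum.tsum_le_tsum hbound hgeom.summable).trans_lt ?_⟩
  have hL := one_lt_mul_neg_log_of_lt_exp_neg_inv hc hdelta hdelta'
  rw [hgeom.tsum_eq, ← mul_inv, inv_lt_one₀ (by linarith)]
  linarith
end
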